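/- Let R be a (not necessarily commutative) ring, and let p, g, c ∈ R satisfy p·p = p, g·g = p, p·g = g, g·p = g. Suppose (p − g − c)^N = 0 in R for some N ≥ 1. Then 2^{N−1}·(p − g) lies in the two-sided ideal of R generated by c. (This abstracts the nilpotence argument showing that π₂×π₂ − Γ_ι∘(π₂×π₂) equals, up to a nonzero multiple, a sum of compositions of correspondences each containing the degenerate correspondence γ.) -/
import Mathlib

theorem two_pow_mul_p_sub_g_mem_span (R : Type*) [Ring R] (p g c : R)
    (hp : p * p = p) (hg : g * g = p) (hpg : p * g = g) (hgp : g * p = g)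
    (N : ℕ) (hN : 1 ≤ N) (hnilp : (p - g - c) ^ N = 0) :
    (2 : R) ^ (N - 1) * (p - g) ∈ TwoSidedIdeal.span ({c} : Set R) := by
  set a : R := p - g with ha
  have ha2 : a * a = 2 * a := by
    have : (2:R) * a = a + a := two_mul a
    rw [this, ha]
    simp only [sub_mul, mul_sub, hp, hg, hpg, hgp]
    abel
  have hpow : ∀ k : ℕ, a ^ (k + 1) = 2 ^ k * a := by
    intro k
    induction k with
    | zero => simp
    | succ n ih =>
      rw [pow_succ, ih, mul_assoc, ha2, ← mul_assoc, ← pow_succ]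
  set I := TwoSidedIdeal.span ({c} : Set R) with hI
  have hc : c ∈ I := TwoSidedIdeal.subset_span rfl
  have hrel : I.ringCon (a - c) a := by
    rw [TwoSidedIdeal.rel_iff]
    simpa using I.neg_mem hc
  have hrelpow : ∀ n : ℕ, I.ringCon ((a - c) ^ n) (a ^ n) := by
    intro n
    induction n with
    | zero => rw [pow_zero, pow_zero]; exact I.ringCon.refl 1
    | succ n ih => rw [pow_succ, pow_succ]; exact I.ringCon.mul ih hrel
  have h0 := hrelpow N
  rw [hnilp] at h0
  have hmem : a ^ N ∈ I := by
    rw [TwoSidedIdeal.mem_iff]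
    exact I.ringCon.symm h0
  obtain ⟨m, rfl⟩ : ∃ m, N = m + 1 := ⟨N - 1, by omega⟩
  rw [hpow m] at hmem
  simpa using hmem
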